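/- arXiv:1712.07468 — 5 statements merged into one kernel-verified Lean document; each statement's English description precedes it below -/
import Mathlib

section
/- Let σ > 0, c_s ≥ 0 and α ∈ ℝ. Suppose (p, w, u) ∈ Q × W × V satisfies the homogeneous coupled system: (i) σ⟨c_s·p + α·D_V u, q⟩ + ⟨D_W w, q⟩ = 0 for all q ∈ Q; (ii) k(w, z) − ⟨p, D_W z⟩ = 0 for all z ∈ W; (iii) a(u, v) − α⟨p, D_V v⟩ = 0 for all v ∈ V. Then p = 0, w = 0 and u = 0. (Abstract form of Lemma 3.4 on uniqueness for the semidiscrete Biot system.) -/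
/-!
Testing the three equations with `q = p`, `z = w` and `v = σ u` and adding them, the coupling
terms cancel and leave `σ c_s ‖p‖² + σ a(u, u) + k(w, w) = 0`, a sum of nonnegative terms.
Hence `k(w, w) = 0`, so `w = 0`; `a(u, u) = 0` forces `d(u, u) ≤ 0`, so `u = 0` by coercivity;
finally the second equation says that `p` is orthogonal to the range of `D_W`, which is all of `Q`.
-/

open RealInnerProductSpace

lemma eq_zero_of_coercive_of_nonpos {E : Type*} [NormedAddCommGroup E] {f : E → ℝ} {κ : ℝ}
    (hκ : 0 < κ) (hf : ∀ v, κ * ‖v‖ ^ 2 ≤ f v) {v : E} (hv : f v ≤ 0) : v = 0 := by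
  have hsq : ‖v‖ ^ 2 ≤ 0 := nonpos_of_mul_nonpos_right ((hf v).trans hv) hκ
  exact norm_eq_zero.mp (pow_eq_zero_iff two_ne_zero |>.mp (le_antisymm hsq (sq_nonneg _)))

lemma eq_zero_of_forall_inner_apply_eq_zero {Q W : Type*}
    [NormedAddCommGroup Q] [InnerProductSpace ℝ Q] [AddCommGroup W] [Module ℝ W]
    {D : W →ₗ[ℝ] Q} (hD : Function.Surjective D) {p : Q} (h : ∀ z, ⟪p, D z⟫ = 0) : p = 0 := by
  obtain ⟨z, hz⟩ := hD p
  exact inner_self_eq_zero.mp (hz ▸ h z)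

lemma biot_energy_identity {Q W V : Type*}
    [NormedAddCommGroup Q] [InnerProductSpace ℝ Q] [AddCommGroup W] [Module ℝ W]
    [AddCommGroup V] [Module ℝ V]
    (DW : W →ₗ[ℝ] Q) (DV : V →ₗ[ℝ] Q) (k : W →ₗ[ℝ] W →ₗ[ℝ] ℝ) (a : V → V → ℝ)
    {σ cs α : ℝ} {p : Q} {w : W} {u : V}
    (h1 : ∀ q : Q, σ * ⟪cs • p + α • DV u, q⟫ + ⟪DW w, q⟫ = 0)
    (h2 : ∀ z : W, k w z - ⟪p, DW z⟫ = 0)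
    (h3 : ∀ v : V, a u v - α * ⟪p, DV v⟫ = 0) :
    σ * (cs * ‖p‖ ^ 2) + σ * a u u + k w w = 0 := by
  have e1 := h1 p
  rw [inner_add_left, real_inner_smul_left, real_inner_smul_left, real_inner_self_eq_norm_sq,
    real_inner_comm p (DV u), real_inner_comm p (DW w)] at e1
  linear_combination e1 + h2 w + σ * h3 u

theorem biot_semidiscrete_uniqueness_general
    {Q W V : Type*}
    [NormedAddCommGroup Q] [InnerProductSpace ℝ Q]
    [NormedAddCommGroup W] [InnerProductSpace ℝ W]
    [NormedAddCommGroup V] [InnerProductSpace ℝ V]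
    (DW : W →ₗ[ℝ] Q) (DV : V →ₗ[ℝ] Q)
    (hDW : Function.Surjective DW)
    (k : W →ₗ[ℝ] W →ₗ[ℝ] ℝ)
    (hk_pos : ∀ z : W, z ≠ 0 → 0 < k z z)
    (d : V →ₗ[ℝ] V →ₗ[ℝ] ℝ)
    (κ : ℝ) (hκ : 0 < κ)
    (hd_coer : ∀ v : V, κ * ‖v‖ ^ 2 ≤ d v v)
    (μ lam : ℝ) (hμ : 0 < μ) (hlam : 0 < lam)
    (a : V → V → ℝ)
    (ha : ∀ u v : V, a u v = μ * d u v + lam * ⟪DV u, DV v⟫)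
    (σ cs α : ℝ) (hσ : 0 < σ) (hcs : 0 ≤ cs)
    (p : Q) (w : W) (u : V)
    (h1 : ∀ q : Q, σ * ⟪cs • p + α • DV u, q⟫ + ⟪DW w, q⟫ = 0)
    (h2 : ∀ z : W, k w z - ⟪p, DW z⟫ = 0)
    (h3 : ∀ v : V, a u v - α * ⟪p, DV v⟫ = 0) :
    p = 0 ∧ w = 0 ∧ u = 0 := by
  have energy := biot_energy_identity DW DV k a h1 h2 h3
  have hk_nonneg : 0 ≤ k w w := by
    rcases eq_or_ne w 0 with rfl | hw
    · simp
    · exact (hk_pos w hw).le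
  have hd_nonneg : 0 ≤ d u u := (by positivity : 0 ≤ κ * ‖u‖ ^ 2).trans (hd_coer u)
  have hDV_nonneg : 0 ≤ ⟪DV u, DV u⟫ := real_inner_self_nonneg
  have ha_nonneg : 0 ≤ σ * a u u := by rw [ha]; positivity
  have hp_nonneg : 0 ≤ σ * (cs * ‖p‖ ^ 2) := by positivity
  have hw : w = 0 := by
    by_contra hw
    linarith [hk_pos w hw]
  have hu : u = 0 := by
    have ha_zero : a u u = 0 := (mul_eq_zero.mp (by linarith)).resolve_left hσ.ne'
    refine eq_zero_of_coercive_of_nonpos hκ hd_coer (nonpos_of_mul_nonpos_right ?_ hμ)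
    linarith [ha u u, mul_nonneg hlam.le hDV_nonneg]
  refine ⟨eq_zero_of_forall_inner_apply_eq_zero hDW fun z => ?_, hw, hu⟩
  simpa [hw] using (h2 z).symm

/-- Abstract form of Lemma 3.4 (uniqueness for the semidiscrete Biot system). -/
theorem biot_semidiscrete_uniqueness
    {Q W V : Type*}
    [NormedAddCommGroup Q] [InnerProductSpace ℝ Q] [FiniteDimensional ℝ Q]
    [NormedAddCommGroup W] [InnerProductSpace ℝ W] [FiniteDimensional ℝ W]
    [NormedAddCommGroup V] [InnerProductSpace ℝ V] [FiniteDimensional ℝ V]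
    (DW : W →ₗ[ℝ] Q) (DV : V →ₗ[ℝ] Q)
    (hDW : Function.Surjective DW)
    (k : W →ₗ[ℝ] W →ₗ[ℝ] ℝ)
    (hk_symm : ∀ z z' : W, k z z' = k z' z)
    (hk_pos : ∀ z : W, z ≠ 0 → 0 < k z z)
    (d : V →ₗ[ℝ] V →ₗ[ℝ] ℝ)
    (hd_symm : ∀ v v' : V, d v v' = d v' v)
    (κ : ℝ) (hκ : 0 < κ)
    (hd_coer : ∀ v : V, κ * ‖v‖ ^ 2 ≤ d v v)
    (μ lam : ℝ) (hμ : 0 < μ) (hlam : 0 < lam)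
    (a : V → V → ℝ)
    (ha : ∀ u v : V, a u v = μ * d u v + lam * ⟪DV u, DV v⟫)
    (σ cs α : ℝ) (hσ : 0 < σ) (hcs : 0 ≤ cs)
    (p : Q) (w : W) (u : V)
    (h1 : ∀ q : Q, σ * ⟪cs • p + α • DV u, q⟫ + ⟪DW w, q⟫ = 0)
    (h2 : ∀ z : W, k w z - ⟪p, DW z⟫ = 0)
    (h3 : ∀ v : V, a u v - α * ⟪p, DV v⟫ = 0) :
    p = 0 ∧ w = 0 ∧ u = 0 :=
  biot_semidiscrete_uniqueness_general DW DV hDW k hk_pos d κ hκ hd_coer μ lam hμ hlam a ha σ cs α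
    hσ hcs p w u h1 h2 h3
end

section
/- Assume the inf-sup condition: there is β > 0 such that for every q ∈ Q there exists z ∈ W with D_W z = q and ‖z‖ ≤ ‖q‖/β. Assume k is bounded: k(z,z) ≤ M‖z‖² for all z ∈ W, for some M > 0. Let e_p ∈ Q and e_w ∈ W satisfy the error relation k(e_w, z) = ⟨e_p, D_W z⟩ for all z ∈ W. Then ‖e_p‖ ≤ (√M/β)·√(k(e_w, e_w)). (Abstract form of Lemma 4.3: the pressure error is controlled by the seepage-velocity error, with constant independent of h, μ, λ, α, c_s.) -/
open RealInnerProductSpace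

theorem LinearMap.BilinForm.apply_le_sqrt_mul_sqrt {M : Type*} [AddCommGroup M] [Module ℝ M]
    (B : LinearMap.BilinForm ℝ M) (hs : ∀ x, 0 ≤ B x x) (hB : LinearMap.IsSymm B) (x y : M) :
    B x y ≤ √(B x x) * √(B y y) := by
  rw [← Real.sqrt_mul (hs x)]
  exact (le_abs_self _).trans (Real.abs_le_sqrt (B.apply_sq_le_of_symm hs hB x y))

theorem le_of_sq_le_mul_self {α : Type*} [Ring α] [LinearOrder α] [IsStrictOrderedRing α]
    {a c : α} (hc : 0 ≤ c) (h : a ^ 2 ≤ c * a) : a ≤ c :=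
  le_of_not_gt fun hca ↦
    (sq a ▸ h).not_gt (mul_lt_mul_of_pos_right hca (hc.trans_lt hca))

theorem biot_pressure_error_bound_general
    {Q W : Type*}
    [NormedAddCommGroup Q] [InnerProductSpace ℝ Q]
    [NormedAddCommGroup W] [InnerProductSpace ℝ W]
    (DW : W →ₗ[ℝ] Q)
    (k : W →ₗ[ℝ] W →ₗ[ℝ] ℝ)
    (hk_symm : ∀ z z' : W, k z z' = k z' z)
    (hk_nonneg : ∀ z : W, 0 ≤ k z z)
    (β M : ℝ) (hβ : 0 < β)
    (hinfsup : ∀ q : Q, ∃ z : W, DW z = q ∧ ‖z‖ ≤ ‖q‖ / β)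
    (hk_bdd : ∀ z : W, k z z ≤ M * ‖z‖ ^ 2)
    (ep : Q) (ew : W)
    (herr : ∀ z : W, k ew z = ⟪ep, DW z⟫) :
    ‖ep‖ ≤ (Real.sqrt M / β) * Real.sqrt (k ew ew) := by
  obtain ⟨z, hz, hz_norm⟩ := hinfsup ep
  have hk_sqrt : √(k z z) ≤ √M * ‖z‖ := by
    simpa [Real.sqrt_mul' M (sq_nonneg ‖z‖)] using Real.sqrt_le_sqrt (hk_bdd z)
  apply le_of_sq_le_mul_self (by positivity)
  calc ‖ep‖ ^ 2 = k ew z := by rw [herr, hz, real_inner_self_eq_norm_sq]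
    _ ≤ √(k ew ew) * √(k z z) :=
      LinearMap.BilinForm.apply_le_sqrt_mul_sqrt k hk_nonneg ⟨hk_symm⟩ ew z
    _ ≤ √(k ew ew) * (√M * (‖ep‖ / β)) := by gcongr; exact hk_sqrt.trans (by gcongr)
    _ = √M / β * √(k ew ew) * ‖ep‖ := by ring

/-- Abstract form of Lemma 4.3: the pressure error is controlled by the
seepage-velocity error via the inf-sup condition. -/
theorem biot_pressure_error_bound
    {Q W : Type*}
    [NormedAddCommGroup Q] [InnerProductSpace ℝ Q] [FiniteDimensional ℝ Q]
    [NormedAddCommGroup W] [InnerProductSpace ℝ W] [FiniteDimensional ℝ W]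
    (DW : W →ₗ[ℝ] Q)
    (k : W →ₗ[ℝ] W →ₗ[ℝ] ℝ)
    (hk_symm : ∀ z z' : W, k z z' = k z' z)
    (hk_nonneg : ∀ z : W, 0 ≤ k z z)
    (β M : ℝ) (hβ : 0 < β) (hM : 0 < M)
    (hinfsup : ∀ q : Q, ∃ z : W, DW z = q ∧ ‖z‖ ≤ ‖q‖ / β)
    (hk_bdd : ∀ z : W, k z z ≤ M * ‖z‖ ^ 2)
    (ep : Q) (ew : W)
    (herr : ∀ z : W, k ew z = ⟪ep, DW z⟫) :
    ‖ep‖ ≤ (Real.sqrt M / β) * Real.sqrt (k ew ew) :=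
  biot_pressure_error_bound_general DW k hk_symm hk_nonneg β M hβ hinfsup hk_bdd ep ew herr
end

section
/- Let Δt > 0, c_s ≥ 0 and α ∈ ℝ. For any linear functionals F : Q → ℝ, G : W → ℝ and H : V → ℝ, there exists exactly one triple (p, w, u) ∈ Q × W × V satisfying: (i) (1/Δt)⟨c_s·p + α·D_V u, q⟩ + ⟨D_W w, q⟩ = F(q) for all q ∈ Q; (ii) k(w, z) − ⟨p, D_W z⟩ = G(z) for all z ∈ W; (iii) a(u, v) − α⟨p, D_V v⟩ = H(v) for all v ∈ V. (Abstract form of Lemma 5.1: existence and uniqueness of each backward Euler time step of the discrete Biot system.) -/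
/-!
A backward Euler step is a square linear system on `Q × W × V`, so it suffices that the
homogeneous system has only the zero solution. Testing it with `(Δt • p, Δt • w, u)` cancels the
coupling terms and leaves `cs ‖p‖² + Δt k(w, w) + a(u, u) = 0`, which forces `w = 0` and `u = 0`;
the Darcy equation then says `⟪p, D_W z⟫ = 0` for all `z`, so `p = 0` because `D_W` is onto.
-/

open RealInnerProductSpace LinearMap

section BiotStep

variable {Q W V : Type*} [NormedAddCommGroup Q] [InnerProductSpace ℝ Q]
  [AddCommGroup W] [Module ℝ W] [AddCommGroup V] [Module ℝ V]

noncomputable def biotStep (DW : W →ₗ[ℝ] Q) (DV : V →ₗ[ℝ] Q) (k : W →ₗ[ℝ] W →ₗ[ℝ] ℝ)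
    (A : V →ₗ[ℝ] V →ₗ[ℝ] ℝ) (Δt cs α : ℝ) :
    Q × W × V →ₗ[ℝ] Module.Dual ℝ Q × Module.Dual ℝ W × Module.Dual ℝ V :=
  (innerₗ Q ∘ₗ (Δt⁻¹ • (cs • fst ℝ Q (W × V) + α • DV ∘ₗ snd ℝ W V ∘ₗ snd ℝ Q (W × V))
      + DW ∘ₗ fst ℝ W V ∘ₗ snd ℝ Q (W × V))).prod
    ((k ∘ₗ fst ℝ W V ∘ₗ snd ℝ Q (W × V) - DW.dualMap ∘ₗ innerₗ Q ∘ₗ fst ℝ Q (W × V)).prod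
      (A ∘ₗ snd ℝ W V ∘ₗ snd ℝ Q (W × V) - α • DV.dualMap ∘ₗ innerₗ Q ∘ₗ fst ℝ Q (W × V)))

variable (DW : W →ₗ[ℝ] Q) (DV : V →ₗ[ℝ] Q) (k : W →ₗ[ℝ] W →ₗ[ℝ] ℝ)
  (A : V →ₗ[ℝ] V →ₗ[ℝ] ℝ) (Δt cs α : ℝ)

theorem biotStep_apply (p : Q) (w : W) (u : V) :
    biotStep DW DV k A Δt cs α (p, w, u) =
      (innerₗ Q (Δt⁻¹ • (cs • p + α • DV u) + DW w),
        k w - DW.dualMap (innerₗ Q p), A u - α • DV.dualMap (innerₗ Q p)) :=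
  rfl

theorem biotStep_eq_iff (p : Q) (w : W) (u : V) (F : Module.Dual ℝ Q)
    (G : Module.Dual ℝ W) (H : Module.Dual ℝ V) :
    biotStep DW DV k A Δt cs α (p, w, u) = (F, G, H) ↔
      (∀ q, Δt⁻¹ * ⟪cs • p + α • DV u, q⟫ + ⟪DW w, q⟫ = F q) ∧
      (∀ z, k w z - ⟪p, DW z⟫ = G z) ∧
      (∀ v, A u v - α * ⟪p, DV v⟫ = H v) := by
  simp only [biotStep_apply, Prod.mk.injEq, LinearMap.ext_iff, innerₗ_apply_apply,
    LinearMap.sub_apply, LinearMap.smul_apply, dualMap_apply, inner_add_left,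
    real_inner_smul_left, smul_eq_mul]

theorem biotStep_energy (p : Q) (w : W) (u : V) (hΔt : Δt ≠ 0) :
    Δt * (biotStep DW DV k A Δt cs α (p, w, u)).1 p
      + Δt * (biotStep DW DV k A Δt cs α (p, w, u)).2.1 w
      + (biotStep DW DV k A Δt cs α (p, w, u)).2.2 u = cs * ⟪p, p⟫ + Δt * k w w + A u u := by
  simp only [biotStep_apply, innerₗ_apply_apply, LinearMap.sub_apply, LinearMap.smul_apply,
    dualMap_apply, real_inner_comm p, inner_add_right, real_inner_smul_right, smul_eq_mul]
  field_simp
  ring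

theorem apply_self_nonneg_of_pos {M : Type*} [AddCommGroup M] [Module ℝ M]
    {B : M →ₗ[ℝ] M →ₗ[ℝ] ℝ} (hB : ∀ x, x ≠ 0 → 0 < B x x) (x : M) : 0 ≤ B x x := by
  rcases eq_or_ne x 0 with rfl | hx
  · simp
  · exact (hB x hx).le

theorem biotStep_injective (hDW : Function.Surjective DW) (hk : ∀ z, z ≠ 0 → 0 < k z z)
    (hA : ∀ u, u ≠ 0 → 0 < A u u) (hΔt : 0 < Δt) (hcs : 0 ≤ cs) :
    Function.Injective (biotStep DW DV k A Δt cs α) := by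
  refine (injective_iff_map_eq_zero _).mpr fun ⟨p, w, u⟩ hx => ?_
  have henergy := biotStep_energy DW DV k A Δt cs α p w u hΔt.ne'
  simp only [hx, Prod.fst_zero, Prod.snd_zero, LinearMap.zero_apply, mul_zero, add_zero] at henergy
  have hkw := mul_nonneg hΔt.le (apply_self_nonneg_of_pos hk w)
  have hAu := apply_self_nonneg_of_pos hA u
  have hpp : 0 ≤ cs * ⟪p, p⟫ := mul_nonneg hcs real_inner_self_nonneg
  obtain rfl : w = 0 := by
    by_contra hw
    linarith [mul_pos hΔt (hk w hw)]
  obtain rfl : u = 0 := by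
    by_contra hu
    linarith [hA u hu]
  have hdarcy : DW.dualMap (innerₗ Q p) = DW.dualMap 0 := by
    simpa [biotStep_apply] using congrArg (fun r => r.2.1) hx
  obtain rfl : p = 0 := by
    simpa using congrArg (· p) (dualMap_injective_of_surjective hDW hdarcy)
  rfl

theorem biotStep_bijective [FiniteDimensional ℝ Q] [FiniteDimensional ℝ W]
    [FiniteDimensional ℝ V] (hDW : Function.Surjective DW) (hk : ∀ z, z ≠ 0 → 0 < k z z)
    (hA : ∀ u, u ≠ 0 → 0 < A u u) (hΔt : 0 < Δt) (hcs : 0 ≤ cs) :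
    Function.Bijective (biotStep DW DV k A Δt cs α) := by
  have hinj := biotStep_injective DW DV k A Δt cs α hDW hk hA hΔt hcs
  refine ⟨hinj, (injective_iff_surjective_of_finrank_eq_finrank ?_).mp hinj⟩
  simp only [Module.finrank_prod, Subspace.dual_finrank_eq]

end BiotStep

theorem mul_coercive_add_mul_inner_self_pos {Q V : Type*} [NormedAddCommGroup Q]
    [InnerProductSpace ℝ Q] [NormedAddCommGroup V] [NormedSpace ℝ V] {d : V →ₗ[ℝ] V →ₗ[ℝ] ℝ}
    {κ μ lam : ℝ} (hκ : 0 < κ) (hd : ∀ v, κ * ‖v‖ ^ 2 ≤ d v v) (hμ : 0 < μ) (hlam : 0 ≤ lam)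
    (D : V →ₗ[ℝ] Q) {u : V} (hu : u ≠ 0) : 0 < μ * d u u + lam * ⟪D u, D u⟫ := by
  have hdu : 0 < d u u := (mul_pos hκ (pow_pos (norm_pos_iff.mpr hu) 2)).trans_le (hd u)
  exact add_pos_of_pos_of_nonneg (mul_pos hμ hdu) (mul_nonneg hlam real_inner_self_nonneg)

theorem biot_backward_euler_step_exists_unique_general
    {Q W V : Type*}
    [NormedAddCommGroup Q] [InnerProductSpace ℝ Q] [FiniteDimensional ℝ Q]
    [NormedAddCommGroup W] [InnerProductSpace ℝ W] [FiniteDimensional ℝ W]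
    [NormedAddCommGroup V] [InnerProductSpace ℝ V] [FiniteDimensional ℝ V]
    (DW : W →ₗ[ℝ] Q) (DV : V →ₗ[ℝ] Q)
    (hDW : Function.Surjective DW)
    (k : W →ₗ[ℝ] W →ₗ[ℝ] ℝ)
    (hk_pos : ∀ z : W, z ≠ 0 → 0 < k z z)
    (d : V →ₗ[ℝ] V →ₗ[ℝ] ℝ)
    (κ : ℝ) (hκ : 0 < κ)
    (hd_coer : ∀ v : V, κ * ‖v‖ ^ 2 ≤ d v v)
    (μ lam : ℝ) (hμ : 0 < μ) (hlam : 0 < lam)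
    (a : V → V → ℝ)
    (ha : ∀ u v : V, a u v = μ * d u v + lam * ⟪DV u, DV v⟫)
    (Δt cs α : ℝ) (hΔt : 0 < Δt) (hcs : 0 ≤ cs)
    (F : Q →ₗ[ℝ] ℝ) (G : W →ₗ[ℝ] ℝ) (Hf : V →ₗ[ℝ] ℝ) :
    ∃! x : Q × W × V,
      (∀ q : Q, (Δt)⁻¹ * ⟪cs • x.1 + α • DV x.2.2, q⟫ + ⟪DW x.2.1, q⟫ = F q) ∧
      (∀ z : W, k x.2.1 z - ⟪x.1, DW z⟫ = G z) ∧
      (∀ v : V, a x.2.2 v - α * ⟪x.1, DV v⟫ = Hf v) := by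
  set A : V →ₗ[ℝ] V →ₗ[ℝ] ℝ := μ • d + lam • (innerₗ Q).compl₁₂ DV DV
  have hA : ∀ u v, A u v = a u v := fun u v => by simp [A, ha]
  have hA_pos : ∀ u, u ≠ 0 → 0 < A u u := fun u hu => by
    simpa [A] using mul_coercive_add_mul_inner_self_pos hκ hd_coer hμ hlam.le DV hu
  have hL := biotStep_bijective DW DV k A Δt cs α hDW hk_pos hA_pos hΔt hcs
  convert hL.existsUnique (F, G, Hf) using 2 with ⟨p, w, u⟩
  simp only [biotStep_eq_iff, hA]

/-- Abstract form of Lemma 5.1: existence and uniqueness of each backward Euler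
time step of the discrete Biot system. -/
theorem biot_backward_euler_step_exists_unique
    {Q W V : Type*}
    [NormedAddCommGroup Q] [InnerProductSpace ℝ Q] [FiniteDimensional ℝ Q]
    [NormedAddCommGroup W] [InnerProductSpace ℝ W] [FiniteDimensional ℝ W]
    [NormedAddCommGroup V] [InnerProductSpace ℝ V] [FiniteDimensional ℝ V]
    (DW : W →ₗ[ℝ] Q) (DV : V →ₗ[ℝ] Q)
    (hDW : Function.Surjective DW)
    (k : W →ₗ[ℝ] W →ₗ[ℝ] ℝ)
    (hk_symm : ∀ z z' : W, k z z' = k z' z)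
    (hk_pos : ∀ z : W, z ≠ 0 → 0 < k z z)
    (d : V →ₗ[ℝ] V →ₗ[ℝ] ℝ)
    (hd_symm : ∀ v v' : V, d v v' = d v' v)
    (κ : ℝ) (hκ : 0 < κ)
    (hd_coer : ∀ v : V, κ * ‖v‖ ^ 2 ≤ d v v)
    (μ lam : ℝ) (hμ : 0 < μ) (hlam : 0 < lam)
    (a : V → V → ℝ)
    (ha : ∀ u v : V, a u v = μ * d u v + lam * ⟪DV u, DV v⟫)
    (Δt cs α : ℝ) (hΔt : 0 < Δt) (hcs : 0 ≤ cs)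
    (F : Q →ₗ[ℝ] ℝ) (G : W →ₗ[ℝ] ℝ) (Hf : V →ₗ[ℝ] ℝ) :
    ∃! x : Q × W × V,
      (∀ q : Q, (Δt)⁻¹ * ⟪cs • x.1 + α • DV x.2.2, q⟫ + ⟪DW x.2.1, q⟫ = F q) ∧
      (∀ z : W, k x.2.1 z - ⟪x.1, DW z⟫ = G z) ∧
      (∀ v : V, a x.2.2 v - α * ⟪x.1, DV v⟫ = Hf v) :=
  biot_backward_euler_step_exists_unique_general DW DV hDW k hk_pos d κ hκ hd_coer μ lam hμ hlam a
    ha Δt cs α hΔt hcs F G Hf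
end

section
/- Let c_s ≥ 0 and α ∈ ℝ. Let χ_p : ℝ → Q, χ_w : ℝ → W, χ_u : ℝ → V be differentiable curves, and let s : ℝ → Q, r : ℝ → W. Suppose that for every t: (i) c_s·χ_p′(t) + α·D_V(χ_u′(t)) + D_W(χ_w(t)) = α·s(t) in Q; (ii) k(χ_w(t), z) − ⟨χ_p(t), D_W z⟩ = k(r(t), z) for all z ∈ W; (iii) a(χ_u(t), v) − α⟨χ_p(t), D_V v⟩ = 0 for all v ∈ V. Then for every t the energy identity holds: (c_s/2)·(d/dt)‖χ_p(t)‖² + k(χ_w(t), χ_w(t)) + (μ/2)·(d/dt) d(χ_u(t), χ_u(t)) + (λ/2)·(d/dt)‖D_V χ_u(t)‖² = α⟨s(t), χ_p(t)⟩ + k(r(t), χ_w(t)). (Abstract form of the reduced error-energy identity derived from equations (4.9)–(4.11) in the proof of Theorem 4.5, after the projection orthogonalities eliminate all other coupling terms.) -/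
open RealInnerProductSpace

section Calculus

variable {E F : Type*} [NormedAddCommGroup E] [NormedSpace ℝ E] [FiniteDimensional ℝ E]
  [NormedAddCommGroup F] [NormedSpace ℝ F] {f : ℝ → E} {f' : E} {t : ℝ}

theorem LinearMap.hasDerivAt_comp (L : E →ₗ[ℝ] F) (hf : HasDerivAt f f' t) :
    HasDerivAt (fun τ => L (f τ)) (L f') t :=
  L.toContinuousLinearMap.hasFDerivAt.comp_hasDerivAt t hf

theorem LinearMap.hasDerivAt_apply_self_of_symm (B : E →ₗ[ℝ] E →ₗ[ℝ] ℝ)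
    (hB : ∀ x y, B x y = B y x) (hf : HasDerivAt f f' t) :
    HasDerivAt (fun τ => B (f τ) (f τ)) (2 * B (f t) f') t := by
  have h := B.toContinuousBilinearMap.hasDerivAt_of_bilinear (fun _ => hf) (fun _ => hf)
  simpa only [LinearMap.toContinuousBilinearMap_apply, hB f' (f t), ← two_mul] using h

end Calculus

theorem biot_error_energy_identity_general
    {Q W V : Type*}
    [NormedAddCommGroup Q] [InnerProductSpace ℝ Q]
    [NormedAddCommGroup W] [InnerProductSpace ℝ W]
    [NormedAddCommGroup V] [InnerProductSpace ℝ V] [FiniteDimensional ℝ V]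
    (DW : W →ₗ[ℝ] Q) (DV : V →ₗ[ℝ] Q)
    (k : W →ₗ[ℝ] W →ₗ[ℝ] ℝ)
    (d : V →ₗ[ℝ] V →ₗ[ℝ] ℝ)
    (hd_symm : ∀ v v' : V, d v v' = d v' v)
    (μ lam : ℝ)
    (a : V → V → ℝ)
    (ha : ∀ u v : V, a u v = μ * d u v + lam * ⟪DV u, DV v⟫)
    (cs α : ℝ)
    (χp : ℝ → Q) (χw : ℝ → W) (χu : ℝ → V) (s : ℝ → Q) (r : ℝ → W)
    (χp' : ℝ → Q) (χu' : ℝ → V)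
    (hχp : ∀ t : ℝ, HasDerivAt χp (χp' t) t)
    (hχu : ∀ t : ℝ, HasDerivAt χu (χu' t) t)
    (h1 : ∀ t : ℝ, cs • χp' t + α • DV (χu' t) + DW (χw t) = α • s t)
    (h2 : ∀ t : ℝ, ∀ z : W, k (χw t) z - ⟪χp t, DW z⟫ = k (r t) z)
    (h3 : ∀ t : ℝ, ∀ v : V, a (χu t) v - α * ⟪χp t, DV v⟫ = 0) :
    ∀ t : ℝ,
      (cs / 2) * deriv (fun τ => ‖χp τ‖ ^ 2) t
        + k (χw t) (χw t)
        + (μ / 2) * deriv (fun τ => d (χu τ) (χu τ)) t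
        + (lam / 2) * deriv (fun τ => ‖DV (χu τ)‖ ^ 2) t
      = α * ⟪s t, χp t⟫ + k (r t) (χw t) := by
  intro t
  rw [(hχp t).norm_sq.deriv, (d.hasDerivAt_apply_self_of_symm hd_symm (hχu t)).deriv,
    (DV.hasDerivAt_comp (hχu t)).norm_sq.deriv, real_inner_comm (χp t) (s t)]
  -- Test (i) with χp, (ii) with χw and (iii) with χu': the coupling terms then cancel in pairs.
  have mass : cs * ⟪χp t, χp' t⟫ + α * ⟪χp t, DV (χu' t)⟫ + ⟪χp t, DW (χw t)⟫
      = α * ⟪χp t, s t⟫ := by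
    simpa only [inner_add_right, real_inner_smul_right] using congrArg (⟪χp t, ·⟫) (h1 t)
  have darcy := h2 t (χw t)
  have elasticity := h3 t (χu' t)
  rw [ha] at elasticity
  linarith

/-- Abstract form of the reduced error-energy identity derived from
equations (4.9)–(4.11) in the proof of Theorem 4.5. -/
theorem biot_error_energy_identity
    {Q W V : Type*}
    [NormedAddCommGroup Q] [InnerProductSpace ℝ Q] [FiniteDimensional ℝ Q]
    [NormedAddCommGroup W] [InnerProductSpace ℝ W] [FiniteDimensional ℝ W]
    [NormedAddCommGroup V] [InnerProductSpace ℝ V] [FiniteDimensional ℝ V]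
    (DW : W →ₗ[ℝ] Q) (DV : V →ₗ[ℝ] Q)
    (k : W →ₗ[ℝ] W →ₗ[ℝ] ℝ)
    (hk_symm : ∀ z z' : W, k z z' = k z' z)
    (hk_nonneg : ∀ z : W, 0 ≤ k z z)
    (d : V →ₗ[ℝ] V →ₗ[ℝ] ℝ)
    (hd_symm : ∀ v v' : V, d v v' = d v' v)
    (μ lam : ℝ) (hμ : 0 < μ) (hlam : 0 < lam)
    (a : V → V → ℝ)
    (ha : ∀ u v : V, a u v = μ * d u v + lam * ⟪DV u, DV v⟫)
    (cs α : ℝ) (hcs : 0 ≤ cs)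
    (χp : ℝ → Q) (χw : ℝ → W) (χu : ℝ → V) (s : ℝ → Q) (r : ℝ → W)
    (χp' : ℝ → Q) (χu' : ℝ → V)
    (hχp : ∀ t : ℝ, HasDerivAt χp (χp' t) t)
    (hχu : ∀ t : ℝ, HasDerivAt χu (χu' t) t)
    (h1 : ∀ t : ℝ, cs • χp' t + α • DV (χu' t) + DW (χw t) = α • s t)
    (h2 : ∀ t : ℝ, ∀ z : W, k (χw t) z - ⟪χp t, DW z⟫ = k (r t) z)
    (h3 : ∀ t : ℝ, ∀ v : V, a (χu t) v - α * ⟪χp t, DV v⟫ = 0) :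
    ∀ t : ℝ,
      (cs / 2) * deriv (fun τ => ‖χp τ‖ ^ 2) t
        + k (χw t) (χw t)
        + (μ / 2) * deriv (fun τ => d (χu τ) (χu τ)) t
        + (lam / 2) * deriv (fun τ => ‖DV (χu τ)‖ ^ 2) t
      = α * ⟪s t, χp t⟫ + k (r t) (χw t) :=
  biot_error_energy_identity_general DW DV k d hd_symm μ lam a ha cs α χp χw χu s r χp' χu' hχp hχu
    h1 h2 h3
end

section
/- Let c_s ≥ 0 and α ∈ ℝ. Let χ_p : ℝ → Q, χ_w : ℝ → W, χ_u : ℝ → V be continuously differentiable curves with χ_p(0) = 0 and χ_u(0) = 0, and let s : ℝ → Q, r : ℝ → W be continuous. Assume: (i) c_s·χ_p′(t) + α·D_V(χ_u′(t)) + D_W(χ_w(t)) = α·s(t) for all t; (ii) k(χ_w(t), z) − ⟨χ_p(t), D_W z⟩ = k(r(t), z) for all z ∈ W and all t; (iii) a(χ_u(t), v) − α⟨χ_p(t), D_V v⟩ = 0 for all v ∈ V and all t. Assume moreover the inf-sup condition (there is β > 0 such that every q ∈ Q has a preimage z under D_W with ‖z‖ ≤ ‖q‖/β) and the boundedness k(z,z)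 ≤ M‖z‖² for all z ∈ W. Then there is a constant C > 0, depending only on β and M (in particular independent of c_s, α, μ, λ, κ and t), such that for all t ≥ 0: c_s‖χ_p(t)‖² + ∫₀ᵗ k(χ_w(τ), χ_w(τ)) dτ + κμ‖χ_u(t)‖² + λ‖D_V χ_u(t)‖² ≤ C ∫₀ᵗ ( α²‖s(τ)‖² + k(r(τ), r(τ)) ) dτ. (Abstract form of the integrated error bound which is the core of Theorem 4.5.) -/
/-!
Energy argument. Testing the mass balance with `χp`, Darcy's law with `χw` and the momentum
balance with `χu'` shows that the energy `E = (c_s ‖χp‖² + a(χu, χu)) / 2` satisfies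
`E' = α ⟪s, χp⟫ - k(χw, χw) + k(r, χw)`. The inf-sup condition bounds the pressure by the flux:
Darcy's law says `⟪χp, D_W z⟫ = k(χw - r, z)`, and testing with a preimage `z` of `χp` gives
`‖χp‖² ≤ (M / β²) k(χw - r, χw - r)`. Young's inequality then absorbs the source term into a
quarter of the dissipation `k(χw, χw)`, and integrating in time gives the bound with
`C = 4 (2 M / β² + 1)`.
-/

open RealInnerProductSpace

namespace LinearMap.BilinForm

variable {W : Type*} [AddCommGroup W] [Module ℝ W] {k : LinearMap.BilinForm ℝ W}

theorem two_mul_apply_le_add (hk : k.IsSymm) (hpos : ∀ x, 0 ≤ k x x) (x y : W) :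
    2 * k x y ≤ k x x + k y y := by
  have h := hpos (x - y)
  simp only [map_sub, LinearMap.sub_apply, hk.eq y x] at h
  linarith

theorem apply_sub_self_le (hk : k.IsSymm) (hpos : ∀ x, 0 ≤ k x x) (x y : W) :
    k (x - y) (x - y) ≤ 2 * (k x x + k y y) := by
  have h := two_mul_apply_le_add hk hpos x (-y)
  simp only [map_sub, map_neg, LinearMap.sub_apply, LinearMap.neg_apply, neg_neg,
    hk.eq y x] at h ⊢
  linarith

theorem hasDerivAt_apply_self {V : Type*} [NormedAddCommGroup V] [NormedSpace ℝ V]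
    [FiniteDimensional ℝ V] {d : LinearMap.BilinForm ℝ V} (hd : d.IsSymm) {u : ℝ → V} {u' : V}
    {τ : ℝ} (hu : HasDerivAt u u' τ) :
    HasDerivAt (fun τ ↦ d (u τ) (u τ)) (2 * d (u τ) u') τ := by
  have h : HasDerivAt (fun τ ↦ d (u τ) (u τ)) (d u' (u τ) + d (u τ) u') τ :=
    (d.toContinuousBilinearMap.hasFDerivAt.comp_hasDerivAt τ hu).clm_apply hu
  exact h.congr_deriv (by rw [hd.eq u' (u τ)]; ring)

end LinearMap.BilinForm

theorem add_integral_le_add_integral_of_hasDerivAt {E E' g f : ℝ → ℝ} {a b : ℝ} (hab : a ≤ b)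
    (hE : ∀ τ, HasDerivAt E (E' τ) τ) (hg : Continuous g) (hf : Continuous f)
    (hle : ∀ τ ∈ Set.Ioo a b, E' τ + g τ ≤ f τ) :
    E b + ∫ τ in a..b, g τ ≤ E a + ∫ τ in a..b, f τ := by
  have hG : ∀ τ, HasDerivAt (fun τ ↦ E τ + ∫ σ in a..τ, g σ) (E' τ + g τ) τ := fun τ ↦
    (hE τ).add (hg.integral_hasStrictDerivAt a τ).hasDerivAt
  have h := intervalIntegral.sub_le_integral_of_hasDeriv_right_of_le hab
    (continuous_iff_continuousAt.mpr fun τ ↦ (hG τ).continuousAt).continuousOn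
    (fun τ _ ↦ (hG τ).hasDerivWithinAt) hf.integrableOn_Icc hle
  simp only [intervalIntegral.integral_same, add_zero] at h
  linarith

theorem norm_sq_le_of_infSup {Q W : Type*} [NormedAddCommGroup Q] [InnerProductSpace ℝ Q]
    [SeminormedAddCommGroup W] [Module ℝ W] {β M : ℝ} (D : W →ₗ[ℝ] Q)
    (hinfsup : ∀ q : Q, ∃ z : W, D z = q ∧ ‖z‖ ≤ ‖q‖ / β) {k : LinearMap.BilinForm ℝ W}
    (hk : k.IsSymm) (hpos : ∀ z, 0 ≤ k z z) (hM : 0 ≤ M) (hbdd : ∀ z, k z z ≤ M * ‖z‖ ^ 2)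
    {p : Q} {e : W} (he : ∀ z, ⟪p, D z⟫ = k e z) :
    ‖p‖ ^ 2 ≤ M / β ^ 2 * k e e := by
  obtain ⟨z, hDz, hz⟩ := hinfsup p
  have hkey : ‖p‖ ^ 2 * ‖p‖ ^ 2 ≤ M / β ^ 2 * k e e * ‖p‖ ^ 2 :=
    calc ‖p‖ ^ 2 * ‖p‖ ^ 2 = k e z ^ 2 := by rw [← he, hDz, real_inner_self_eq_norm_sq]; ring
      _ ≤ k e e * k z z := k.apply_sq_le_of_symm hpos (LinearMap.BilinForm.isSymm_iff.mp hk) e z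
      _ ≤ k e e * (M * ‖z‖ ^ 2) := mul_le_mul_of_nonneg_left (hbdd z) (hpos e)
      _ ≤ k e e * (M * (‖p‖ / β) ^ 2) := by have := hpos e; gcongr
      _ = M / β ^ 2 * k e e * ‖p‖ ^ 2 := by ring
  rcases (sq_nonneg ‖p‖).eq_or_lt with hp | hp
  · rw [← hp]
    exact mul_nonneg (by positivity) (hpos e)
  · exact le_of_mul_le_mul_right hkey hp

theorem mul_le_of_sq_le_mul {c x y K : ℝ} (hc : 0 ≤ c) (hK : 0 ≤ K) (hy : y ^ 2 ≤ 2 * c * K) :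
    x * y ≤ 2 * c * x ^ 2 + K / 4 := by
  rcases hc.eq_or_lt with rfl | hc
  · have : y = 0 := pow_eq_zero_iff two_ne_zero |>.mp (by nlinarith [sq_nonneg y])
    simp only [this, mul_zero]
    positivity
  · nlinarith [sq_nonneg (4 * c * x - y)]

section Biot

variable {Q W V : Type*} [NormedAddCommGroup Q] [InnerProductSpace ℝ Q]
  [NormedAddCommGroup W] [InnerProductSpace ℝ W] [NormedAddCommGroup V] [InnerProductSpace ℝ V]

noncomputable def biotEnergy (d : LinearMap.BilinForm ℝ V) (DV : V →ₗ[ℝ] Q) (cs μ lam : ℝ)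
    (p : Q) (u : V) : ℝ :=
  (cs * ‖p‖ ^ 2 + μ * d u u + lam * ‖DV u‖ ^ 2) / 2

theorem hasDerivAt_biotEnergy [FiniteDimensional ℝ V] {d : LinearMap.BilinForm ℝ V}
    (hd : d.IsSymm) (DV : V →ₗ[ℝ] Q) (cs μ lam : ℝ) {p : ℝ → Q} {u : ℝ → V} {p' : Q} {u' : V}
    {τ : ℝ} (hp : HasDerivAt p p' τ) (hu : HasDerivAt u u' τ) :
    HasDerivAt (fun τ ↦ biotEnergy d DV cs μ lam (p τ) (u τ))
      (cs * ⟪p τ, p'⟫ + μ * d (u τ) u' + lam * ⟪DV (u τ), DV u'⟫) τ := by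
  have hDV : HasDerivAt (fun τ ↦ DV (u τ)) (DV u') τ :=
    DV.toContinuousLinearMap.hasFDerivAt.comp_hasDerivAt τ hu
  exact ((((hp.norm_sq.const_mul cs).add
    ((LinearMap.BilinForm.hasDerivAt_apply_self hd hu).const_mul μ)).add
    (hDV.norm_sq.const_mul lam)).div_const 2).congr_deriv (by ring)

theorem add_le_two_mul_biotEnergy {d : LinearMap.BilinForm ℝ V} {κ μ : ℝ} (hμ : 0 ≤ μ)
    (hd : ∀ v, κ * ‖v‖ ^ 2 ≤ d v v) (DV : V →ₗ[ℝ] Q) (cs lam : ℝ) (p : Q) (u : V) :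
    cs * ‖p‖ ^ 2 + κ * μ * ‖u‖ ^ 2 + lam * ‖DV u‖ ^ 2 ≤ 2 * biotEnergy d DV cs μ lam p u := by
  have := mul_le_mul_of_nonneg_left (hd u) hμ
  unfold biotEnergy
  linarith

theorem norm_sq_le_of_darcy {DW : W →ₗ[ℝ] Q} {β M : ℝ}
    (hinfsup : ∀ q : Q, ∃ z : W, DW z = q ∧ ‖z‖ ≤ ‖q‖ / β) {k : LinearMap.BilinForm ℝ W}
    (hk : k.IsSymm) (hpos : ∀ z, 0 ≤ k z z) (hM : 0 ≤ M) (hbdd : ∀ z, k z z ≤ M * ‖z‖ ^ 2)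
    {p : Q} {w r : W} (hdarcy : ∀ z, k w z - ⟪p, DW z⟫ = k r z) :
    ‖p‖ ^ 2 ≤ 2 * (M / β ^ 2) * (k w w + k r r) :=
  calc ‖p‖ ^ 2 ≤ M / β ^ 2 * k (w - r) (w - r) :=
        norm_sq_le_of_infSup DW hinfsup hk hpos hM hbdd fun z ↦ by
          simp only [map_sub, LinearMap.sub_apply]; linarith [hdarcy z]
    _ ≤ M / β ^ 2 * (2 * (k w w + k r r)) :=
        mul_le_mul_of_nonneg_left (k.apply_sub_self_le hk hpos w r) (by positivity)
    _ = 2 * (M / β ^ 2) * (k w w + k r r) := by ring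

theorem biotEnergy_rate_eq {DW : W →ₗ[ℝ] Q} {DV : V →ₗ[ℝ] Q} {k : LinearMap.BilinForm ℝ W}
    {d : LinearMap.BilinForm ℝ V} {cs α μ lam : ℝ} {p p' s : Q} {w r : W} {u u' : V}
    (hmass : cs • p' + α • DV u' + DW w = α • s) (hdarcy : ∀ z, k w z - ⟪p, DW z⟫ = k r z)
    (hmomentum : ∀ v, μ * d u v + lam * ⟪DV u, DV v⟫ - α * ⟪p, DV v⟫ = 0) :
    cs * ⟪p, p'⟫ + μ * d u u' + lam * ⟪DV u, DV u'⟫ = α * ⟪s, p⟫ - k w w + k r w := by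
  have hmass_p := congrArg (fun q ↦ ⟪p, q⟫) hmass
  simp only [inner_add_right, real_inner_smul_right] at hmass_p
  linear_combination hmass_p + hdarcy w + hmomentum u' + α * real_inner_comm s p

theorem biotEnergy_rate_add_le {DW : W →ₗ[ℝ] Q} {DV : V →ₗ[ℝ] Q} {k : LinearMap.BilinForm ℝ W}
    (hk : k.IsSymm) (hpos : ∀ z, 0 ≤ k z z) {d : LinearMap.BilinForm ℝ V} {cs α μ lam c : ℝ}
    (hc : 0 ≤ c) {p p' s : Q} {w r : W} {u u' : V}
    (hmass : cs • p' + α • DV u' + DW w = α • s) (hdarcy : ∀ z, k w z - ⟪p, DW z⟫ = k r z)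
    (hmomentum : ∀ v, μ * d u v + lam * ⟪DV u, DV v⟫ - α * ⟪p, DV v⟫ = 0)
    (hp : ‖p‖ ^ 2 ≤ 2 * c * (k w w + k r r)) :
    cs * ⟪p, p'⟫ + μ * d u u' + lam * ⟪DV u, DV u'⟫ + k w w / 4
      ≤ (2 * c + 1) * (α ^ 2 * ‖s‖ ^ 2 + k r r) := by
  rw [biotEnergy_rate_eq hmass hdarcy hmomentum]
  have hkrw := k.two_mul_apply_le_add hk hpos r w
  have hsp : α * ⟪s, p⟫ ≤ (|α| * ‖s‖) * ‖p‖ :=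
    calc α * ⟪s, p⟫ ≤ |α * ⟪s, p⟫| := le_abs_self _
      _ ≤ |α| * (‖s‖ * ‖p‖) := by rw [abs_mul]; gcongr; exact abs_real_inner_le_norm s p
      _ = (|α| * ‖s‖) * ‖p‖ := by ring
  have hyoung := mul_le_of_sq_le_mul (x := |α| * ‖s‖) hc (add_nonneg (hpos w) (hpos r)) hp
  rw [mul_pow, sq_abs] at hyoung
  nlinarith [hpos r]

end Biot

theorem biot_integrated_error_bound_general (β M : ℝ) (hM : 0 < M) :
    ∃ C > 0,
      ∀ (Q W V : Type)
        [NormedAddCommGroup Q] [InnerProductSpace ℝ Q] [FiniteDimensional ℝ Q]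
        [NormedAddCommGroup W] [InnerProductSpace ℝ W] [FiniteDimensional ℝ W]
        [NormedAddCommGroup V] [InnerProductSpace ℝ V] [FiniteDimensional ℝ V]
        (DW : W →ₗ[ℝ] Q) (DV : V →ₗ[ℝ] Q)
        (k : W →ₗ[ℝ] W →ₗ[ℝ] ℝ)
        (_hk_symm : ∀ z z' : W, k z z' = k z' z)
        (_hk_nonneg : ∀ z : W, 0 ≤ k z z)
        (d : V →ₗ[ℝ] V →ₗ[ℝ] ℝ)
        (_hd_symm : ∀ v v' : V, d v v' = d v' v)
        (κ : ℝ) (_hκ : 0 < κ)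
        (_hd_coer : ∀ v : V, κ * ‖v‖ ^ 2 ≤ d v v)
        (μ lam : ℝ) (_hμ : 0 < μ) (_hlam : 0 < lam)
        (a : V → V → ℝ)
        (_ha : ∀ u v : V, a u v = μ * d u v + lam * ⟪DV u, DV v⟫)
        (cs α : ℝ) (_hcs : 0 ≤ cs)
        (χp : ℝ → Q) (χw : ℝ → W) (χu : ℝ → V) (s : ℝ → Q) (r : ℝ → W)
        (_hχpC1 : ContDiff ℝ 1 χp) (_hχwC1 : ContDiff ℝ 1 χw) (_hχuC1 : ContDiff ℝ 1 χu)
        (_hs : Continuous s) (_hr : Continuous r)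
        (_hχp0 : χp 0 = 0) (_hχu0 : χu 0 = 0)
        (_h1 : ∀ t : ℝ, cs • deriv χp t + α • DV (deriv χu t) + DW (χw t) = α • s t)
        (_h2 : ∀ t : ℝ, ∀ z : W, k (χw t) z - ⟪χp t, DW z⟫ = k (r t) z)
        (_h3 : ∀ t : ℝ, ∀ v : V, a (χu t) v - α * ⟪χp t, DV v⟫ = 0)
        (_hinfsup : ∀ q : Q, ∃ z : W, DW z = q ∧ ‖z‖ ≤ ‖q‖ / β)
        (_hk_bdd : ∀ z : W, k z z ≤ M * ‖z‖ ^ 2)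
        (t : ℝ), 0 ≤ t →
        cs * ‖χp t‖ ^ 2 + (∫ τ in (0 : ℝ)..t, k (χw τ) (χw τ))
            + κ * μ * ‖χu t‖ ^ 2 + lam * ‖DV (χu t)‖ ^ 2
          ≤ C * ∫ τ in (0 : ℝ)..t, (α ^ 2 * ‖s τ‖ ^ 2 + k (r τ) (r τ)) := by
  refine ⟨4 * (2 * (M / β ^ 2) + 1), by positivity, ?_⟩
  intro Q W V _ _ _ _ _ _ _ _ _ DW DV k hk_symm hk_nonneg d hd_symm κ hκ hd_coer μ lam hμ hlam
    a ha cs α hcs χp χw χu s r hχp hχw hχu hs hr hχp0 hχu0 h1 h2 h3 hinfsup hk_bdd t ht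
  have hk : LinearMap.BilinForm.IsSymm k := ⟨hk_symm⟩
  have hderiv (τ : ℝ) := hasDerivAt_biotEnergy ⟨hd_symm⟩ DV cs μ lam
    (hχp.differentiable one_ne_zero τ).hasDerivAt (hχu.differentiable one_ne_zero τ).hasDerivAt
  have henergy := add_integral_le_add_integral_of_hasDerivAt ht hderiv
    (g := fun τ ↦ k (χw τ) (χw τ) / 4)
    (f := fun τ ↦ (2 * (M / β ^ 2) + 1) * (α ^ 2 * ‖s τ‖ ^ 2 + k (r τ) (r τ)))
    ((k.toContinuousBilinearMap.continuous₂.comp₂ hχw.continuous hχw.continuous).div_const 4)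
    (continuous_const.mul ((continuous_const.mul (hs.norm.pow 2)).add
      (k.toContinuousBilinearMap.continuous₂.comp₂ hr hr)))
    fun τ _ ↦ biotEnergy_rate_add_le hk hk_nonneg (by positivity) (h1 τ) (h2 τ)
      (fun v ↦ by rw [← ha]; exact h3 τ v)
      (norm_sq_le_of_darcy hinfsup hk hk_nonneg hM.le hk_bdd (h2 τ))
  simp only [intervalIntegral.integral_div, intervalIntegral.integral_const_mul, hχp0, hχu0,
    biotEnergy, map_zero, norm_zero] at henergy
  have hlower := add_le_two_mul_biotEnergy hμ.le hd_coer DV cs lam (χp t) (χu t)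
  have hnonneg : 0 ≤ cs * ‖χp t‖ ^ 2 + κ * μ * ‖χu t‖ ^ 2 + lam * ‖DV (χu t)‖ ^ 2 := by positivity
  unfold biotEnergy at hlower
  linarith

/-- Abstract form of the integrated error bound which is the core of Theorem 4.5.
The constant `C` depends only on the inf-sup constant `β` and the continuity
constant `M` of the form `k`. -/
theorem biot_integrated_error_bound (β M : ℝ) (hβ : 0 < β) (hM : 0 < M) :
    ∃ C > 0,
      ∀ (Q W V : Type)
        [NormedAddCommGroup Q] [InnerProductSpace ℝ Q] [FiniteDimensional ℝ Q]
        [NormedAddCommGroup W] [InnerProductSpace ℝ W] [FiniteDimensional ℝ W]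
        [NormedAddCommGroup V] [InnerProductSpace ℝ V] [FiniteDimensional ℝ V]
        (DW : W →ₗ[ℝ] Q) (DV : V →ₗ[ℝ] Q)
        (k : W →ₗ[ℝ] W →ₗ[ℝ] ℝ)
        (_hk_symm : ∀ z z' : W, k z z' = k z' z)
        (_hk_nonneg : ∀ z : W, 0 ≤ k z z)
        (d : V →ₗ[ℝ] V →ₗ[ℝ] ℝ)
        (_hd_symm : ∀ v v' : V, d v v' = d v' v)
        (κ : ℝ) (_hκ : 0 < κ)
        (_hd_coer : ∀ v : V, κ * ‖v‖ ^ 2 ≤ d v v)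
        (μ lam : ℝ) (_hμ : 0 < μ) (_hlam : 0 < lam)
        (a : V → V → ℝ)
        (_ha : ∀ u v : V, a u v = μ * d u v + lam * ⟪DV u, DV v⟫)
        (cs α : ℝ) (_hcs : 0 ≤ cs)
        (χp : ℝ → Q) (χw : ℝ → W) (χu : ℝ → V) (s : ℝ → Q) (r : ℝ → W)
        (_hχpC1 : ContDiff ℝ 1 χp) (_hχwC1 : ContDiff ℝ 1 χw) (_hχuC1 : ContDiff ℝ 1 χu)
        (_hs : Continuous s) (_hr : Continuous r)
        (_hχp0 : χp 0 = 0) (_hχu0 : χu 0 = 0)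
        (_h1 : ∀ t : ℝ, cs • deriv χp t + α • DV (deriv χu t) + DW (χw t) = α • s t)
        (_h2 : ∀ t : ℝ, ∀ z : W, k (χw t) z - ⟪χp t, DW z⟫ = k (r t) z)
        (_h3 : ∀ t : ℝ, ∀ v : V, a (χu t) v - α * ⟪χp t, DV v⟫ = 0)
        (_hinfsup : ∀ q : Q, ∃ z : W, DW z = q ∧ ‖z‖ ≤ ‖q‖ / β)
        (_hk_bdd : ∀ z : W, k z z ≤ M * ‖z‖ ^ 2)
        (t : ℝ), 0 ≤ t →
        cs * ‖χp t‖ ^ 2 + (∫ τ in (0 : ℝ)..t, k (χw τ) (χw τ))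
            + κ * μ * ‖χu t‖ ^ 2 + lam * ‖DV (χu t)‖ ^ 2
          ≤ C * ∫ τ in (0 : ℝ)..t, (α ^ 2 * ‖s τ‖ ^ 2 + k (r τ) (r τ)) :=
  biot_integrated_error_bound_general β M hM
end
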